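/- arXiv:2205.15292 — 2 statements merged into one kernel-verified Lean document; each statement's English description precedes it below -/
import Mathlib

section
/- Let S = (R_i)_{i∈I} be a family of fuzzy relations on U, X_0 a fuzzy relation on U, and x ∈ L. Define the sequence of fuzzy relations by X_{n+1} = X_n ⊓ ⨅_{i∈I} ((x → (R_i ∘ X_n)) / R_i) ⊓ ⨅_{i∈I} (R_i \ (x → (X_n ∘ R_i))). Then for every m: X_m = X_{m+1} if and only if X_m is the greatest element of the set {X | X ≤ X_0 and x ≤ SD_3(S)(X)}, i.e., X_m belongs to this set and every member Q of this set satisfies Q ≤ X_m. -/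
/-- A complete residuated lattice: a complete lattice with a commutative monoid
operation `otimes` whose unit is the top element, distributing over arbitrary
suprema, together with its residuum `res` characterized by the adjunction. -/
class CRL (L : Type*) extends CompleteLattice L where
  /-- the multiplication ⊗ -/
  otimes : L → L → L
  otimes_comm : ∀ a b : L, otimes a b = otimes b a
  otimes_assoc : ∀ a b c : L, otimes (otimes a b) c = otimes a (otimes b c)
  otimes_top : ∀ a : L, otimes a ⊤ = a
  otimes_sSup : ∀ (a : L) (s : Set L), otimes a (sSup s) = ⨆ b ∈ s, otimes a b
  /-- the residuum → -/
  res : L → L → L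
  otimes_le_iff : ∀ a b c : L, otimes a b ≤ c ↔ a ≤ res b c

variable {L : Type*} [CRL L] {U : Type*}

/-- The biresiduum x ↔ y = (x → y) ⊓ (y → x). -/
def bres (a b : L) : L := CRL.res a b ⊓ CRL.res b a

/-- Composition of fuzzy relations: (R ∘ P)(u,v) = ⨆ w, R(u,w) ⊗ P(w,v). -/
def fcomp (R P : U → U → L) : U → U → L :=
  fun u v => ⨆ w, CRL.otimes (R u w) (P w v)

/-- Inclusion degree of fuzzy relations: R ≲ Q. -/
def incl (R Q : U → U → L) : L := ⨅ u, ⨅ v, CRL.res (R u v) (Q u v)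

/-- Equality degree of fuzzy relations: R ≈ Q. -/
def eqd (R Q : U → U → L) : L := ⨅ u, ⨅ v, bres (R u v) (Q u v)

/-- SD_1(S)(X) = ⨅ i, ((X ∘ R_i) ≲ (R_i ∘ X)). -/
def SD1 {I : Type*} (S : I → U → U → L) (X : U → U → L) : L :=
  ⨅ i, incl (fcomp X (S i)) (fcomp (S i) X)

/-- SD_2(S)(X) = ⨅ i, ((R_i ∘ X) ≲ (X ∘ R_i)). -/
def SD2 {I : Type*} (S : I → U → U → L) (X : U → U → L) : L :=
  ⨅ i, incl (fcomp (S i) X) (fcomp X (S i))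

/-- SD_3(S)(X) = SD_1(S)(X) ⊓ SD_2(S)(X). -/
def SD3 {I : Type*} (S : I → U → U → L) (X : U → U → L) : L :=
  SD1 S X ⊓ SD2 S X

/-- The left residual Q / R : (Q / R)(u,v) = ⨅ w, R(v,w) → Q(u,w). -/
def lres (Q R : U → U → L) : U → U → L := fun u v => ⨅ w, CRL.res (R v w) (Q u w)

/-- The right residual R \\ Q : (R \\ Q)(u,v) = ⨅ w, R(w,u) → Q(w,v). -/
def rres (R Q : U → U → L) : U → U → L := fun u v => ⨅ w, CRL.res (R w u) (Q w v)

/-- Scalar residuation acting pointwise on a fuzzy relation: (x → Q)(u,v) = x → Q(u,v). -/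
def sres (x : L) (Q : U → U → L) : U → U → L := fun u v => CRL.res x (Q u v)

private lemma otimes_mono_right (c : L) {a b : L} (h : a ≤ b) :
    CRL.otimes c a ≤ CRL.otimes c b := by
  have hs : CRL.otimes c (sSup {a, b}) = ⨆ d ∈ ({a, b} : Set L), CRL.otimes c d :=
    CRL.otimes_sSup c {a, b}
  rw [sSup_pair, sup_eq_right.mpr h] at hs
  rw [hs]
  exact le_biSup (fun d => CRL.otimes c d) (by simp)

private lemma otimes_mono {a b a' b' : L} (h1 : a ≤ a') (h2 : b ≤ b') :
    CRL.otimes a b ≤ CRL.otimes a' b' := by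
  calc CRL.otimes a b ≤ CRL.otimes a b' := otimes_mono_right a h2
    _ = CRL.otimes b' a := CRL.otimes_comm _ _
    _ ≤ CRL.otimes b' a' := otimes_mono_right b' h1
    _ = CRL.otimes a' b' := CRL.otimes_comm _ _

private lemma res_mono_right {b : L} {c c' : L} (h : c ≤ c') :
    CRL.res b c ≤ CRL.res b c' := by
  rw [← CRL.otimes_le_iff]
  exact le_trans ((CRL.otimes_le_iff (CRL.res b c) b c).mpr le_rfl) h

private lemma fcomp_mono {R R' P P' : U → U → L} (h1 : R ≤ R') (h2 : P ≤ P') :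
    fcomp R P ≤ fcomp R' P' := fun u v =>
  iSup_mono fun w => otimes_mono (h1 u w) (h2 w v)

private lemma sres_mono (x : L) {Q Q' : U → U → L} (h : Q ≤ Q') :
    sres x Q ≤ sres x Q' := fun u v => res_mono_right (h u v)

private lemma lres_mono {Q Q' R : U → U → L} (h : Q ≤ Q') :
    lres Q R ≤ lres Q' R := fun u v => iInf_mono fun w => res_mono_right (h u w)

private lemma rres_mono {R Q Q' : U → U → L} (h : Q ≤ Q') :
    rres R Q ≤ rres R Q' := fun u v => iInf_mono fun w => res_mono_right (h w v)

private lemma le_lres_iff {Xr Q R : U → U → L} : Xr ≤ lres Q R ↔ fcomp Xr R ≤ Q := by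
  constructor
  · intro h u w
    apply iSup_le; intro v
    exact (CRL.otimes_le_iff _ _ _).mpr (le_trans (h u v) (iInf_le _ w))
  · intro h u v
    apply le_iInf; intro w
    exact (CRL.otimes_le_iff _ _ _).mp
      (le_trans (le_iSup (fun v => CRL.otimes (Xr u v) (R v w)) v) (h u w))

private lemma le_rres_iff {Xr Q R : U → U → L} : Xr ≤ rres R Q ↔ fcomp R Xr ≤ Q := by
  constructor
  · intro h w v
    apply iSup_le; intro u
    rw [CRL.otimes_comm]
    exact (CRL.otimes_le_iff _ _ _).mpr (le_trans (h u v) (iInf_le _ w))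
  · intro h u v
    apply le_iInf; intro w
    rw [← CRL.otimes_le_iff, CRL.otimes_comm]
    exact le_trans (le_iSup (fun u => CRL.otimes (R w u) (Xr u v)) u) (h w v)

private lemma le_incl_iff {x : L} {A B : U → U → L} :
    x ≤ incl A B ↔ A ≤ sres x B := by
  rw [incl]
  simp only [le_iInf_iff]
  constructor
  · intro h u v
    have h1 := h u v
    rw [← CRL.otimes_le_iff] at h1
    rw [CRL.otimes_comm] at h1
    exact (CRL.otimes_le_iff _ _ _).mp h1
  · intro h u v
    rw [← CRL.otimes_le_iff, CRL.otimes_comm]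
    exact (CRL.otimes_le_iff _ _ _).mpr (h u v)

private lemma le_SD3_iff {I : Type*} {S : I → U → U → L} {Y : U → U → L} {x : L} :
    x ≤ SD3 S Y ↔
      (Y ≤ ⨅ i, lres (sres x (fcomp (S i) Y)) (S i)) ∧
      (Y ≤ ⨅ i, rres (S i) (sres x (fcomp Y (S i)))) := by
  rw [SD3, le_inf_iff, SD1, SD2]
  simp only [le_iInf_iff]
  constructor
  · rintro ⟨h1, h2⟩
    exact ⟨fun i => le_lres_iff.mpr (le_incl_iff.mp (h1 i)),
           fun i => le_rres_iff.mpr (le_incl_iff.mp (h2 i))⟩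
  · rintro ⟨h1, h2⟩
    exact ⟨fun i => le_incl_iff.mpr (le_lres_iff.mp (h1 i)),
           fun i => le_incl_iff.mpr (le_rres_iff.mp (h2 i))⟩

/-- For the sequence X_{n+1} = X_n ⊓ ⨅ i ((x → (R_i ∘ X_n)) / R_i) ⊓ ⨅ i (R_i \\ (x → (X_n ∘ R_i)))
with X_0 given: X_m = X_{m+1} iff X_m is the greatest element of
{X | X ≤ X₀ ∧ x ≤ SD₃(S)(X)}. -/
theorem stmt12 [Nonempty U] {I : Type*} (S : I → U → U → L) (X0 : U → U → L) (x : L)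
    (X : ℕ → U → U → L) (h0 : X 0 = X0)
    (hrec : ∀ n, X (n + 1) =
      X n ⊓ (⨅ i, lres (sres x (fcomp (S i) (X n))) (S i))
          ⊓ (⨅ i, rres (S i) (sres x (fcomp (X n) (S i))))) :
    ∀ m, X m = X (m + 1) ↔
      (X m ≤ X0 ∧ x ≤ SD3 S (X m) ∧
        ∀ Q : U → U → L, Q ≤ X0 → x ≤ SD3 S Q → Q ≤ X m) := fun m => by
  have hdec : ∀ n, X (n + 1) ≤ X n := fun n => by
    rw [hrec]; exact le_trans inf_le_left inf_le_left
  have hle0 : ∀ n, X n ≤ X0 := by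
    intro n
    induction n with
    | zero => rw [h0]
    | succ k ih => exact le_trans (hdec k) ih
  have hfix : ∀ n, X n = X (n + 1) ↔ x ≤ SD3 S (X n) := by
    intro n
    constructor
    · intro h
      apply le_SD3_iff.mpr
      constructor
      · calc X n = X (n + 1) := h
          _ ≤ _ := by rw [hrec]; exact le_trans inf_le_left inf_le_right
      · calc X n = X (n + 1) := h
          _ ≤ _ := by rw [hrec]; exact inf_le_right
    · intro h
      obtain ⟨h1, h2⟩ := le_SD3_iff.mp h
      refine le_antisymm ?_ (hdec n)
      rw [hrec]
      exact le_inf (le_inf le_rfl h1) h2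
  have hgreat : ∀ Q : U → U → L, Q ≤ X0 → x ≤ SD3 S Q → ∀ n, Q ≤ X n := by
    intro Q hQ0 hQ n
    obtain ⟨h1, h2⟩ := le_SD3_iff.mp hQ
    induction n with
    | zero => rw [h0]; exact hQ0
    | succ k ih =>
      rw [hrec]
      refine le_inf (le_inf ih ?_) ?_
      · exact le_trans h1 (iInf_mono fun i =>
          lres_mono (sres_mono x (fcomp_mono le_rfl ih)))
      · exact le_trans h2 (iInf_mono fun i =>
          rres_mono (sres_mono x (fcomp_mono ih le_rfl)))
  constructor
  · intro h
    exact ⟨hle0 m, (hfix m).mp h, fun Q hQ0 hQ => hgreat Q hQ0 hQ m⟩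
  · rintro ⟨-, hx, -⟩
    exact (hfix m).mpr hx
end

section
/- Generalized residuation properties for degrees: for all fuzzy relations X, R, Q on U, the following equalities hold in L: ((X ∘ R) ≲ Q) = (X ≲ (Q / R)) and ((R ∘ X) ≲ Q) = (X ≲ (R \ Q)). -/
variable {L : Type*} [CRL L] {U : Type*}

lemma otimes_iSup' {ι : Sort*} (a : L) (f : ι → L) :
    CRL.otimes a (⨆ i, f i) = ⨆ i, CRL.otimes a (f i) := by
  rw [iSup, CRL.otimes_sSup, iSup_range]

/-- Generalized residuation properties:
((X ∘ R) ≲ Q) = (X ≲ (Q / R)) and ((R ∘ X) ≲ Q) = (X ≲ (R \\ Q)). -/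
theorem stmt13 [Nonempty U] (X R Q : U → U → L) :
    incl (fcomp X R) Q = incl X (lres Q R) ∧
    incl (fcomp R X) Q = incl X (rres R Q) := by
  have key : ∀ a b c d : L, CRL.otimes a (CRL.otimes b c) ≤ d ↔
      CRL.otimes (CRL.otimes a b) c ≤ d := by
    intro a b c d; rw [CRL.otimes_assoc]
  constructor
  · apply eq_of_forall_le_iff
    intro t
    simp only [incl, fcomp, lres, le_iInf_iff, ← CRL.otimes_le_iff, otimes_iSup',
      iSup_le_iff]
    constructor
    · intro h u w v
      exact (key ..).mp (h u v w)
    · intro h u v w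
      exact (key ..).mpr (h u w v)
  · apply eq_of_forall_le_iff
    intro t
    simp only [incl, fcomp, rres, le_iInf_iff, ← CRL.otimes_le_iff, otimes_iSup',
      iSup_le_iff]
    constructor
    · intro h u w v
      have := h v w u
      rwa [CRL.otimes_comm (R v u) (X u w), key] at this
    · intro h u v w
      have := h w v u
      rwa [← key, CRL.otimes_comm (X w v) (R u w)] at this
end
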